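/- arXiv:2506.20843 — 2 statements merged into one kernel-verified Lean document; each statement's English description precedes it below -/
import Mathlib

section
/- The generalized Hilbert–Schmidt distance d₂ defined on the disjoint union of unitary groups by d₂(x,y) = ‖x ⊕ 0_{m−n} − y‖_{2,m} for x ∈ U(n), y ∈ U(m), n ≤ m (where ‖·‖_{2,m} is the normalized Hilbert–Schmidt norm on M_m(ℂ)) is a metric on ⨆_{m∈ℕ} U(m). -/
open Matrix

/-- normalized Hilbert–Schmidt norm on `m × m` complex matrices -/
noncomputable def nHS (m : ℕ) (A : Matrix (Fin m) (Fin m) ℂ) : ℝ :=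
  Real.sqrt (((Matrix.trace (Aᴴ * A)).re) / m)

/-- pad an `n × n` matrix to an `m × m` matrix by a zero block -/
def padMat {n m : ℕ} (A : Matrix (Fin n) (Fin n) ℂ) : Matrix (Fin m) (Fin m) ℂ :=
  fun i j => if hi : (i : ℕ) < n then if hj : (j : ℕ) < n then A ⟨i, hi⟩ ⟨j, hj⟩ else 0 else 0

/-- the generalized Hilbert–Schmidt distance on `⨆ₘ U(m)` -/
noncomputable def d₂ (x y : Σ m : ℕ, Matrix.unitaryGroup (Fin m) ℂ) : ℝ :=
  if x.1 ≤ y.1 then nHS y.1 (padMat (x.2 : Matrix (Fin x.1) (Fin x.1) ℂ) - (y.2 : Matrix (Fin y.1) (Fin y.1) ℂ))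
  else nHS x.1 (padMat (y.2 : Matrix (Fin y.1) (Fin y.1) ℂ) - (x.2 : Matrix (Fin x.1) (Fin x.1) ℂ))

/-!
Pad all three matrices to a common size. The unnormalized Hilbert–Schmidt norm is a norm, so when
the middle point `y` does not live in the largest of the three unitary groups, the triangle
inequality follows after normalizing, because the denominators of `d₂ x y` and `d₂ y z` are the
smaller ones.

Otherwise `y ∈ U(N)` with `N > M := max (dim x) (dim z)`. Let `X`, `Z` be `x`, `z` padded to size
`M` and `Y'` the top-left `M × M` corner of `y`. Pythagoras gives `N · d₂(x, y)² = ‖X - Y'‖² + t` and `N · d₂(y, z)² = ‖Z - Y'‖² + t` with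
`t = N - ‖Y'‖² ≥ N - M`, since the rows of `y` are unit vectors. Minkowski's inequality in `ℝ²`
together with `‖X - Z‖ ≤ ‖X - Y'‖ + ‖Y' - Z‖` and `‖X - Z‖ ≤ 2√M` then bounds
`d₂(x, z) = ‖X - Z‖ / √M`.
-/

attribute [local instance] Matrix.frobeniusNormedAddCommGroup

open Finset

theorem Matrix.frobenius_norm_sq {m n α : Type*} [Fintype m] [Fintype n]
    [NormedAddCommGroup α] (A : Matrix m n α) :
    ‖A‖ ^ 2 = ∑ i, ∑ j, ‖A i j‖ ^ 2 := by
  rw [frobenius_norm_def, ← Real.sqrt_eq_rpow, Real.sq_sqrt (by positivity)]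
  simp only [Real.rpow_two]

theorem Matrix.re_trace_conjTranspose_mul_self {m n 𝕜 : Type*} [Fintype m] [Fintype n]
    [RCLike 𝕜] (A : Matrix m n 𝕜) : RCLike.re (Aᴴ * A).trace = ‖A‖ ^ 2 := by
  rw [frobenius_norm_sq, sum_comm]
  simp only [trace, diag_apply, mul_apply, conjTranspose_apply, map_sum]
  refine sum_congr rfl fun j _ => sum_congr rfl fun i _ => ?_
  rw [mul_comm, RCLike.star_def, RCLike.mul_conj]
  norm_cast

theorem Matrix.frobenius_norm_sq_of_mem_unitaryGroup {n 𝕜 : Type*} [Fintype n] [DecidableEq n]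
    [RCLike 𝕜] {U : Matrix n n 𝕜} (hU : U ∈ unitaryGroup n 𝕜) :
    ‖U‖ ^ 2 = Fintype.card n := by
  have hUU : Uᴴ * U = 1 := Unitary.star_mul_self_of_mem hU
  rw [← re_trace_conjTranspose_mul_self, hUU, trace_one]
  simp

theorem Matrix.sum_norm_sq_row_of_mem_unitaryGroup {n 𝕜 : Type*} [Fintype n] [DecidableEq n]
    [RCLike 𝕜] {U : Matrix n n 𝕜} (hU : U ∈ unitaryGroup n 𝕜) (i : n) :
    ∑ j, ‖U i j‖ ^ 2 = 1 := by
  have hUU : U * Uᴴ = 1 := Unitary.mul_star_self_of_mem hU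
  have h := congrFun (congrFun hUU i) i
  simp only [mul_apply, conjTranspose_apply, RCLike.star_def,
    RCLike.mul_conj, one_apply_eq] at h
  exact_mod_cast h

theorem nHS_eq_norm_div_sqrt {m : ℕ} (A : Matrix (Fin m) (Fin m) ℂ) :
    nHS m A = ‖A‖ / √m := by
  rw [nHS, ← RCLike.re_to_complex, re_trace_conjTranspose_mul_self, Real.sqrt_div (sq_nonneg _),
    Real.sqrt_sq (norm_nonneg _)]

theorem Fin.sum_castLE {β : Type*} [AddCommMonoid β] {n M : ℕ} (h : n ≤ M) (f : Fin M → β)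
    (hf : ∀ i : Fin M, n ≤ i → f i = 0) : ∑ i : Fin n, f (Fin.castLE h i) = ∑ i, f i :=
  Fintype.sum_of_injective _ (Fin.castLE_injective h) _ _
    (fun i hi => hf i (not_lt.1 fun hlt => hi ⟨⟨i, hlt⟩, rfl⟩)) fun _ => rfl

theorem Fin.sum_castLE_le {M n : ℕ} (h : n ≤ M) {f : Fin M → ℝ} (hf : ∀ i, 0 ≤ f i) :
    ∑ i : Fin n, f (Fin.castLE h i) ≤ ∑ i, f i := by
  calc ∑ i : Fin n, f (Fin.castLE h i) = ∑ i ∈ univ.map (Fin.castLEEmb h), f i :=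
        (sum_map univ (Fin.castLEEmb h) f).symm
    _ ≤ ∑ i, f i := sum_le_univ_sum_of_nonneg hf

section padMat

variable {n m N : ℕ}

theorem padMat_apply_of_lt (A : Matrix (Fin n) (Fin n) ℂ) {i j : Fin m} (hi : (i : ℕ) < n)
    (hj : (j : ℕ) < n) : padMat A i j = A ⟨i, hi⟩ ⟨j, hj⟩ := by
  simp [padMat, hi, hj]

theorem padMat_apply_eq_zero (A : Matrix (Fin n) (Fin n) ℂ) {i j : Fin m}
    (h : n ≤ i ∨ n ≤ j) : padMat A i j = 0 := by
  rcases h with h | h <;> simp [padMat, not_lt.2 h]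

theorem padMat_zero : (padMat (0 : Matrix (Fin n) (Fin n) ℂ) : Matrix (Fin m) (Fin m) ℂ) = 0 := by
  ext i j
  simp [padMat]

theorem padMat_self (A : Matrix (Fin n) (Fin n) ℂ) :
    (padMat A : Matrix (Fin n) (Fin n) ℂ) = A := by
  ext i j
  exact padMat_apply_of_lt A i.2 j.2

theorem padMat_padMat (h : n ≤ m) (A : Matrix (Fin n) (Fin n) ℂ) :
    (padMat (padMat A : Matrix (Fin m) (Fin m) ℂ) : Matrix (Fin N) (Fin N) ℂ) = padMat A := by
  ext i j
  simp only [padMat]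
  split_ifs <;> first | rfl | omega

theorem padMat_sub (A B : Matrix (Fin n) (Fin n) ℂ) :
    (padMat (A - B) : Matrix (Fin m) (Fin m) ℂ) = padMat A - padMat B := by
  ext i j
  simp only [padMat, Matrix.sub_apply]
  split_ifs <;> simp

theorem norm_padMat_sub_sq_add (h : m ≤ N) (B : Matrix (Fin m) (Fin m) ℂ)
    (A : Matrix (Fin N) (Fin N) ℂ) :
    ‖padMat B - A‖ ^ 2 + ‖(padMat A : Matrix (Fin m) (Fin m) ℂ)‖ ^ 2 =
      ‖B - padMat A‖ ^ 2 + ‖A‖ ^ 2 := by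
  have hblock : ∑ i : Fin N, ∑ j : Fin N,
        (‖(padMat B - A : Matrix (Fin N) (Fin N) ℂ) i j‖ ^ 2 - ‖A i j‖ ^ 2) =
      ∑ i : Fin m, ∑ j : Fin m,
        (‖(B - padMat A : Matrix (Fin m) (Fin m) ℂ) i j‖ ^ 2 -
          ‖(padMat A : Matrix (Fin m) (Fin m) ℂ) i j‖ ^ 2) := by
    have hzero (i j : Fin N) (hij : m ≤ i ∨ m ≤ j) :
        ‖(padMat B - A : Matrix (Fin N) (Fin N) ℂ) i j‖ ^ 2 - ‖A i j‖ ^ 2 = 0 := by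
      simp [padMat_apply_eq_zero B hij]
    rw [← Fin.sum_castLE h _ fun i hi => sum_eq_zero fun j _ => hzero i j (.inl hi)]
    refine sum_congr rfl fun i _ => ?_
    rw [← Fin.sum_castLE h _ fun j hj => hzero _ j (.inr hj)]
    refine sum_congr rfl fun j _ => ?_
    rw [Matrix.sub_apply, Matrix.sub_apply,
      padMat_apply_of_lt B (i := Fin.castLE h i) (j := Fin.castLE h j) i.2 j.2,
      padMat_apply_of_lt A (i.2.trans_le h) (j.2.trans_le h)]
    rfl
  simp only [frobenius_norm_sq, sum_sub_distrib] at hblock ⊢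
  linarith

theorem norm_padMat (h : n ≤ m) (A : Matrix (Fin n) (Fin n) ℂ) :
    ‖(padMat A : Matrix (Fin m) (Fin m) ℂ)‖ = ‖A‖ := by
  have := norm_padMat_sub_sq_add h A 0
  simp only [padMat_zero, sub_zero, norm_zero] at this
  exact (sq_eq_sq₀ (norm_nonneg _) (norm_nonneg _)).1 (by linarith)

theorem norm_padMat_sq_le_of_mem_unitaryGroup (h : m ≤ N) {U : Matrix (Fin N) (Fin N) ℂ}
    (hU : U ∈ unitaryGroup (Fin N) ℂ) : ‖(padMat U : Matrix (Fin m) (Fin m) ℂ)‖ ^ 2 ≤ m := by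
  calc ‖(padMat U : Matrix (Fin m) (Fin m) ℂ)‖ ^ 2
      = ∑ i : Fin m, ∑ j : Fin m, ‖U (Fin.castLE h i) (Fin.castLE h j)‖ ^ 2 := by
        rw [frobenius_norm_sq]
        exact sum_congr rfl fun i _ => sum_congr rfl fun j _ => by
          rw [padMat_apply_of_lt U (i.2.trans_le h) (j.2.trans_le h)]
          rfl
    _ ≤ ∑ i : Fin m, ∑ j, ‖U (Fin.castLE h i) j‖ ^ 2 :=
        sum_le_sum fun i _ =>
          Fin.sum_castLE_le h (f := fun j => ‖U (Fin.castLE h i) j‖ ^ 2) fun _ => sq_nonneg _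
    _ = m := by
        rw [sum_congr rfl fun i _ => sum_norm_sq_row_of_mem_unitaryGroup hU _]
        simp

end padMat

theorem div_sqrt_le_sqrt_add_div_sqrt_add {A B C m N t : ℝ} (hC : 0 ≤ C) (hCAB : C ≤ A + B)
    (hCm : C ≤ 2 * √m) (hmN : m ≤ N) (ht : N - m ≤ t) :
    C / √m ≤ √(A ^ 2 + t) / √N + √(B ^ 2 + t) / √N := by
  rcases (Real.sqrt_nonneg m).eq_or_lt with hm | hm
  · rw [← hm, div_zero]
    positivity
  have hm : 0 < m := Real.sqrt_pos.1 hm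
  have hN : 0 < N := hm.trans_le hmN
  have ht0 : 0 ≤ t := by linarith
  set a := √(A ^ 2 + t)
  set b := √(B ^ 2 + t)
  have ha : a ^ 2 = A ^ 2 + t := Real.sq_sqrt (by positivity)
  have hb : b ^ 2 = B ^ 2 + t := Real.sq_sqrt (by positivity)
  -- Minkowski in `ℝ²`: `‖(A, √t)‖ + ‖(B, √t)‖ ≥ ‖(A + B, 2√t)‖`
  have hab : A * B + t ≤ a * b := by
    rw [← Real.sqrt_mul (by positivity)]
    exact Real.le_sqrt_of_sq_le (by nlinarith [mul_nonneg ht0 (sq_nonneg (A - B))])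
  have hC2 : C ^ 2 ≤ 4 * m := by nlinarith [Real.sq_sqrt hm.le]
  have key : C ^ 2 / m ≤ (a + b) ^ 2 / N := by
    rw [div_le_div_iff₀ hm hN]
    nlinarith [mul_le_mul_of_nonneg_right hC2 (sub_nonneg.2 hmN),
      mul_le_mul_of_nonneg_left ht hm.le, mul_le_mul_of_nonneg_left hab hm.le,
      mul_le_mul_of_nonneg_left (pow_le_pow_left₀ hC hCAB 2) hm.le]
  calc C / √m = √(C ^ 2 / m) := by rw [Real.sqrt_div' _ hm.le, Real.sqrt_sq hC]
    _ ≤ √((a + b) ^ 2 / N) := Real.sqrt_le_sqrt key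
    _ = a / √N + b / √N := by rw [Real.sqrt_div' _ hN.le, Real.sqrt_sq (by positivity), add_div]

local notation "𝒰" => Σ m : ℕ, Matrix.unitaryGroup (Fin m) ℂ

def padTo (M : ℕ) (x : 𝒰) : Matrix (Fin M) (Fin M) ℂ :=
  padMat (x.2 : Matrix (Fin x.1) (Fin x.1) ℂ)

section d₂

variable {x y z : 𝒰} {M : ℕ}

theorem norm_padTo (hx : x.1 ≤ M) : ‖padTo M x‖ = √x.1 := by
  rw [padTo, norm_padMat hx, ← Real.sqrt_sq (norm_nonneg _),
    frobenius_norm_sq_of_mem_unitaryGroup x.2.2, Fintype.card_fin]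

theorem eq_of_padTo_eq (hx : x.1 ≤ M) (hy : y.1 ≤ M) (h : padTo M x = padTo M y) : x = y := by
  have hdim : x.1 = y.1 := by
    have h' := congrArg norm h
    rwa [norm_padTo hx, norm_padTo hy, Real.sqrt_inj (Nat.cast_nonneg _) (Nat.cast_nonneg _),
      Nat.cast_inj] at h'
  obtain ⟨n, u⟩ := x
  obtain ⟨n', v⟩ := y
  obtain rfl : n = n' := hdim
  have h' := congrArg (padMat · : Matrix (Fin M) (Fin M) ℂ → Matrix (Fin n) (Fin n) ℂ) h
  simp only [padTo, padMat_padMat hx, padMat_self] at h'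
  rw [Subtype.ext h']

theorem eq_of_fst_eq_zero (hx : x.1 = 0) (hy : y.1 = 0) : x = y :=
  eq_of_padTo_eq (M := 0) hx.le hy.le (Subsingleton.elim _ _)

theorem d₂_eq (hx : x.1 ≤ M) (hy : y.1 ≤ M) :
    d₂ x y = ‖padTo M x - padTo M y‖ / √(max x.1 y.1 : ℕ) := by
  unfold d₂
  split_ifs with hxy
  · rw [max_eq_right hxy, nHS_eq_norm_div_sqrt, ← norm_padMat hy, padMat_sub,
      padMat_padMat hxy]
    rfl
  · rw [max_eq_left (le_of_not_ge hxy), nHS_eq_norm_div_sqrt, ← norm_padMat hx, padMat_sub,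
      padMat_padMat (le_of_not_ge hxy), norm_sub_rev]
    rfl

theorem d₂_nonneg : 0 ≤ d₂ x y := by
  rw [d₂_eq (le_max_left x.1 y.1) (le_max_right x.1 y.1)]
  positivity

theorem d₂_symm : d₂ x y = d₂ y x := by
  rw [d₂_eq (le_max_left x.1 y.1) (le_max_right x.1 y.1),
    d₂_eq (le_max_right x.1 y.1) (le_max_left x.1 y.1), norm_sub_rev, max_comm]

theorem d₂_eq_zero_iff : d₂ x y = 0 ↔ x = y := by
  constructor
  · intro h
    rw [d₂_eq (le_max_left x.1 y.1) (le_max_right x.1 y.1), div_eq_zero_iff, norm_eq_zero,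
      sub_eq_zero] at h
    rcases h with h | h
    · exact eq_of_padTo_eq (le_max_left _ _) (le_max_right _ _) h
    · rw [Real.sqrt_eq_zero (Nat.cast_nonneg _), Nat.cast_eq_zero] at h
      exact eq_of_fst_eq_zero (by omega) (by omega)
  · rintro rfl
    rw [d₂_eq le_rfl le_rfl (M := x.1), sub_self, norm_zero, zero_div]

theorem norm_padTo_sub_div_le_d₂ (hx : x.1 ≤ M) (hy : y.1 ≤ M) :
    ‖padTo M x - padTo M y‖ / √M ≤ d₂ x y := by
  rcases Nat.eq_zero_or_pos (max x.1 y.1) with h0 | hpos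
  · rw [eq_of_fst_eq_zero (x := x) (y := y) (by omega) (by omega), sub_self, norm_zero, zero_div]
    exact d₂_nonneg
  · rw [d₂_eq hx hy]
    exact div_le_div_of_nonneg_left (norm_nonneg _) (by positivity)
      (Real.sqrt_le_sqrt (by exact_mod_cast max_le hx hy))

theorem d₂_eq_of_le_of_le (hx : x.1 ≤ M) (hM : M ≤ y.1) :
    d₂ x y = √(‖padTo M x - padMat (y.2 : Matrix (Fin y.1) (Fin y.1) ℂ)‖ ^ 2 +
      (y.1 - ‖(padMat (y.2 : Matrix (Fin y.1) (Fin y.1) ℂ) : Matrix (Fin M) (Fin M) ℂ)‖ ^ 2)) /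
      √y.1 := by
  have hpyth := norm_padMat_sub_sq_add hM (padTo M x) (y.2 : Matrix (Fin y.1) (Fin y.1) ℂ)
  rw [frobenius_norm_sq_of_mem_unitaryGroup y.2.2, Fintype.card_fin] at hpyth
  rw [d₂_eq (hx.trans hM) le_rfl, max_eq_right (hx.trans hM),
    show padTo y.1 x = padMat (padTo M x) from (padMat_padMat hx _).symm,
    show padTo y.1 y = y.2 from padMat_self _, ← Real.sqrt_sq (norm_nonneg (_ - _))]
  congr 2
  linarith

theorem d₂_triangle_of_le (hy : y.1 ≤ max x.1 z.1) : d₂ x z ≤ d₂ x y + d₂ y z := by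
  have hx := le_max_left x.1 z.1
  have hz := le_max_right x.1 z.1
  calc d₂ x z = ‖padTo _ x - padTo _ z‖ / √(max x.1 z.1 : ℕ) := d₂_eq hx hz
    _ ≤ (‖padTo _ x - padTo _ y‖ + ‖padTo _ y - padTo _ z‖) / √(max x.1 z.1 : ℕ) := by
      gcongr
      exact norm_sub_le_norm_sub_add_norm_sub _ _ _
    _ ≤ d₂ x y + d₂ y z := by
      rw [add_div]
      exact add_le_add (norm_padTo_sub_div_le_d₂ hx hy) (norm_padTo_sub_div_le_d₂ hy hz)

theorem d₂_triangle_of_lt (hy : max x.1 z.1 < y.1) : d₂ x z ≤ d₂ x y + d₂ y z := by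
  set M := max x.1 z.1
  have hx : x.1 ≤ M := le_max_left _ _
  have hz : z.1 ≤ M := le_max_right _ _
  set Y' : Matrix (Fin M) (Fin M) ℂ := padMat (y.2 : Matrix (Fin y.1) (Fin y.1) ℂ)
  rw [d₂_eq hx hz, d₂_eq_of_le_of_le hx hy.le, d₂_symm, d₂_eq_of_le_of_le hz hy.le]
  refine div_sqrt_le_sqrt_add_div_sqrt_add (norm_nonneg _) ?_ ?_ (by exact_mod_cast hy.le)
    (by linarith [norm_padMat_sq_le_of_mem_unitaryGroup hy.le y.2.2])
  · calc ‖padTo M x - padTo M z‖ ≤ ‖padTo M x - Y'‖ + ‖Y' - padTo M z‖ :=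
          norm_sub_le_norm_sub_add_norm_sub _ _ _
      _ = ‖padTo M x - Y'‖ + ‖padTo M z - Y'‖ := by rw [norm_sub_rev Y']
  · calc ‖padTo M x - padTo M z‖ ≤ √x.1 + √z.1 := by
          rw [← norm_padTo hx, ← norm_padTo hz]
          exact norm_sub_le _ _
      _ ≤ 2 * √(M : ℕ) := by
          rw [two_mul]
          gcongr

theorem d₂_triangle : d₂ x z ≤ d₂ x y + d₂ y z :=
  (le_or_gt y.1 (max x.1 z.1)).elim d₂_triangle_of_le d₂_triangle_of_lt

end d₂

/-- `d₂` is a metric on the disjoint union of the unitary groups. -/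
theorem d₂_is_metric :
    (∀ x y : Σ m : ℕ, Matrix.unitaryGroup (Fin m) ℂ, d₂ x y = 0 ↔ x = y) ∧
    (∀ x y : Σ m : ℕ, Matrix.unitaryGroup (Fin m) ℂ, d₂ x y = d₂ y x) ∧
    (∀ x y z : Σ m : ℕ, Matrix.unitaryGroup (Fin m) ℂ, d₂ x z ≤ d₂ x y + d₂ y z) :=
  ⟨fun _ _ => d₂_eq_zero_iff, fun _ _ => d₂_symm, fun _ _ _ => d₂_triangle⟩
end

section
/- Let Γ be a countable group, c : Γ × Γ → 𝕋 a 2-cocycle (with trivial Γ-action on 𝕋), and suppose λ_n : Γ → 𝕋 is a sequence of functions such that for every g, h ∈ Γ, lim_n λ_n(g)⁻¹λ_n(h)⁻¹λ_n(gh) = c(g, h). Then c is a 2-coboundary, i.e. there exists λ : Γ → 𝕋 with c(g, h) = λ(g)λ(h)λ(gh)⁻¹ for all g, h ∈ Γ. -/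
open Filter Topology

theorem exists_forall_eq_of_tendsto_comp {α ι X Y : Type*} [TopologicalSpace X] [CompactSpace X]
    [TopologicalSpace Y] [T2Space Y] {l : Filter α} [l.NeBot] {u : α → X} {F : ι → X → Y}
    (hF : ∀ i, Continuous (F i)) {y : ι → Y} (hu : ∀ i, Tendsto (F i ∘ u) l (𝓝 (y i))) :
    ∃ x, ∀ i, F i x = y i := by
  obtain ⟨x, -, hx⟩ := isCompact_univ.exists_mapClusterPt (u := u) (f := l) (by simp)
  refine ⟨x, fun i => ?_⟩
  have hFx : ClusterPt (F i x) (map (F i ∘ u) l) := hx.continuousAt_comp (hF i).continuousAt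
  exact eq_of_nhds_neBot (hFx.neBot.mono (inf_le_inf_left _ (hu i)))

theorem coboundary_of_limit_of_almost_coboundaries_general
    {Γ : Type*} [Group Γ]
    (c : Γ → Γ → Circle)
    (lam : ℕ → Γ → Circle)
    (hlim : ∀ g h : Γ,
      Tendsto (fun n => (lam n g)⁻¹ * (lam n h)⁻¹ * lam n (g * h)) atTop (nhds (c g h))) :
    ∃ l : Γ → Circle, ∀ g h : Γ, c g h = l g * l h * (l (g * h))⁻¹ := by
  obtain ⟨l, hl⟩ := exists_forall_eq_of_tendsto_comp
    (F := fun (p : Γ × Γ) (l : Γ → Circle) => (l p.1)⁻¹ * (l p.2)⁻¹ * l (p.1 * p.2))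
    (fun _ => by fun_prop) (fun p => hlim p.1 p.2)
  refine ⟨l⁻¹, fun g h => ?_⟩
  simp [← hl (g, h)]

/-- If a `𝕋`-valued 2-cocycle `c` on a countable group `Γ` (trivial action)
is a pointwise limit of "asymptotic coboundaries" `(g,h) ↦ λ_n(g)⁻¹λ_n(h)⁻¹λ_n(gh)`, then `c`
is a 2-coboundary. -/
theorem coboundary_of_limit_of_almost_coboundaries
    {Γ : Type*} [Group Γ] [Countable Γ]
    (c : Γ → Γ → Circle)
    (hcocycle : ∀ g h k : Γ, c g h * c (g * h) k = c h k * c g (h * k))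
    (lam : ℕ → Γ → Circle)
    (hlim : ∀ g h : Γ,
      Tendsto (fun n => (lam n g)⁻¹ * (lam n h)⁻¹ * lam n (g * h)) atTop (nhds (c g h))) :
    ∃ l : Γ → Circle, ∀ g h : Γ, c g h = l g * l h * (l (g * h))⁻¹ :=
  coboundary_of_limit_of_almost_coboundaries_general c lam hlim
end
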